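/- Filtered backprojection inversion formula: for sufficiently regular f (e.g., Schwartz class on ℝ²), f(x,y) = ∫_0^{π} F₁⁻¹( F₁(Rf(θ,·)) · |·| )( y cos θ − x sin θ ) dθ, where F₁ denotes the 1D Fourier transform in the offset variable. -/

import Mathlib

open Real MeasureTheory Complex SchwartzMap

noncomputable def radonS (f : 𝓢(ℝ × ℝ, ℂ)) (θ t : ℝ) : ℂ :=
  ∫ z : ℝ, f (z * Real.cos θ - t * Real.sin θ, z * Real.sin θ + t * Real.cos θ)

/-- 1D Fourier transform of the projection in the offset variable. -/
noncomputable def fourierProj (f : 𝓢(ℝ × ℝ, ℂ)) (θ r : ℝ) : ℂ :=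
  ∫ t : ℝ, radonS f θ t * Complex.exp (-2 * Real.pi * Complex.I * r * t)

/-!
By the Fourier slice theorem, `r ↦ fourierProj f θ r` is the 2D Fourier transform `F₂f` of `f`
restricted to the line `r ↦ r • (-sin θ, cos θ)`. Fourier inversion writes `f (x, y)` as the
integral of `g ξ = F₂f ξ · e^{2πi⟨(x, y), ξ⟩}` over the plane; in polar coordinates this is
`∫_{-π}^{π} ∫_0^∞ r g(r cos φ, r sin φ) dr dφ`. Pairing the rays at angles `φ` and `φ + π` turns
half a period of angles into full lines, and the Jacobian `r` into the ramp filter `|r|`.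
-/

open scoped FourierTransform RealInnerProductSpace
open Set

noncomputable section

theorem Function.Periodic.intervalIntegral_add_add_eq {E : Type*} [NormedAddCommGroup E]
    [NormedSpace ℝ E] {H : ℝ → E} {p : ℝ} (hH : Function.Periodic H (2 * p))
    (hc : Continuous H) (a b : ℝ) :
    ∫ t in a..a + p, (H t + H (t + p)) = ∫ t in b..b + 2 * p, H t := by
  have hshift : Continuous fun t => H (t + p) := hc.comp (continuous_add_const p)
  rw [intervalIntegral.integral_add (hc.intervalIntegrable _ _) (hshift.intervalIntegrable _ _),
    intervalIntegral.integral_comp_add_right H,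
    intervalIntegral.integral_add_adjacent_intervals (hc.intervalIntegrable _ _)
      (hc.intervalIntegrable _ _), add_assoc, ← two_mul]
  exact hH.intervalIntegral_add_eq a b

theorem SchwartzMap.exists_one_add_norm_pow_mul_le {E F : Type*} [NormedAddCommGroup E]
    [NormedSpace ℝ E] [NormedAddCommGroup F] [NormedSpace ℝ F] (g : 𝓢(E, F)) (k : ℕ) :
    ∃ C, ∀ x, (1 + ‖x‖) ^ k * ‖g x‖ ≤ C :=
  ⟨_, fun x => by
    simpa using one_add_le_sup_seminorm_apply (𝕜 := ℝ) (m := (k, 0)) le_rfl le_rfl g x⟩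

theorem integrable_of_one_add_norm_pow_mul_le {V F : Type*} [NormedAddCommGroup V]
    [NormedSpace ℝ V] [FiniteDimensional ℝ V] [MeasurableSpace V] [BorelSpace V]
    {μ : Measure V} [μ.IsAddHaarMeasure] [NormedAddCommGroup F] {g : V → F} {k : ℕ} {C : ℝ}
    (hk : Module.finrank ℝ V < k) (hg : AEStronglyMeasurable g μ)
    (hdecay : ∀ x, (1 + ‖x‖) ^ k * ‖g x‖ ≤ C) : Integrable g μ := by
  refine ((integrable_one_add_norm (μ := μ) (r := k) (by exact_mod_cast hk)).const_mul C).mono'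
    hg (Filter.Eventually.of_forall fun x => ?_)
  rw [rpow_neg (by positivity), ← div_eq_mul_inv, le_div_iff₀ (by positivity), mul_comm,
    rpow_natCast]
  exact hdecay x

theorem abs_le_two_mul_norm_polar (r φ : ℝ) :
    |r| ≤ 2 * ‖(r * Real.cos φ, r * Real.sin φ)‖ := by
  have hsq := Real.cos_sq_add_sin_sq φ
  rw [Prod.norm_def, Real.norm_eq_abs, Real.norm_eq_abs, abs_mul, abs_mul]
  rcases le_total |Real.cos φ| |Real.sin φ| with h | h
  · have : 1 ≤ 2 * |Real.sin φ| := by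
      nlinarith [sq_abs (Real.cos φ), sq_abs (Real.sin φ), abs_nonneg (Real.cos φ)]
    nlinarith [le_max_right (|r| * |Real.cos φ|) (|r| * |Real.sin φ|), abs_nonneg r]
  · have : 1 ≤ 2 * |Real.cos φ| := by
      nlinarith [sq_abs (Real.cos φ), sq_abs (Real.sin φ), abs_nonneg (Real.sin φ)]
    nlinarith [le_max_left (|r| * |Real.cos φ|) (|r| * |Real.sin φ|), abs_nonneg r]

section Polar

variable {E : Type*} [NormedAddCommGroup E] [NormedSpace ℝ E] {g : ℝ × ℝ → E} {C : ℝ}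

def radialIntegral (g : ℝ × ℝ → E) (φ : ℝ) : E :=
  ∫ r in Ioi 0, r • g (r * Real.cos φ, r * Real.sin φ)

theorem periodic_radialIntegral (g : ℝ × ℝ → E) :
    Function.Periodic (radialIntegral g) (2 * π) := by
  intro φ
  simp only [radialIntegral, Real.cos_add_two_pi, Real.sin_add_two_pi]

theorem norm_smul_polar_le (hdecay : ∀ q, (1 + ‖q‖) ^ 3 * ‖g q‖ ≤ C) (r φ : ℝ) :
    ‖r • g (r * Real.cos φ, r * Real.sin φ)‖ ≤ 8 * C * (1 + r ^ 2)⁻¹ := by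
  have hr := abs_le_two_mul_norm_polar r φ
  set q := (r * Real.cos φ, r * Real.sin φ)
  have hweight : |r| * (1 + r ^ 2) ≤ 8 * (1 + ‖q‖) ^ 3 := by
    have hcube : |r| ^ 3 ≤ (2 * ‖q‖) ^ 3 := pow_le_pow_left₀ (abs_nonneg r) hr 3
    have hq := norm_nonneg q
    rw [← sq_abs r]
    nlinarith [pow_nonneg hq 2, pow_nonneg hq 3]
  rw [← div_eq_mul_inv, le_div_iff₀ (by positivity), norm_smul, Real.norm_eq_abs]
  calc |r| * ‖g q‖ * (1 + r ^ 2) = |r| * (1 + r ^ 2) * ‖g q‖ := by ring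
    _ ≤ 8 * (1 + ‖q‖) ^ 3 * ‖g q‖ := by gcongr
    _ ≤ 8 * C := by rw [mul_assoc]; gcongr; exact hdecay q

theorem continuous_radialIntegral (hg : Continuous g)
    (hdecay : ∀ q, (1 + ‖q‖) ^ 3 * ‖g q‖ ≤ C) : Continuous (radialIntegral g) :=
  continuous_of_dominated
    (fun φ => (continuous_id.smul (hg.comp (by fun_prop))).aestronglyMeasurable.restrict)
    (fun φ => Filter.Eventually.of_forall fun r => norm_smul_polar_le hdecay r φ)
    ((integrable_inv_one_add_sq.const_mul _).integrableOn)
    (Filter.Eventually.of_forall fun r => continuous_const.smul (hg.comp (by fun_prop)))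

theorem integral_abs_smul_eq_radialIntegral_add (hg : Continuous g)
    (hdecay : ∀ q, (1 + ‖q‖) ^ 3 * ‖g q‖ ≤ C) (φ : ℝ) :
    ∫ r, |r| • g (r * Real.cos φ, r * Real.sin φ)
      = radialIntegral g φ + radialIntegral g (φ + π) := by
  have hint : Integrable fun r : ℝ => |r| • g (r * Real.cos φ, r * Real.sin φ) :=
    (integrable_inv_one_add_sq.const_mul (8 * C)).mono'
      ((continuous_abs.smul (hg.comp (by fun_prop))).aestronglyMeasurable)
      (Filter.Eventually.of_forall fun r => by
        simpa only [norm_smul, Real.norm_eq_abs, abs_abs] using norm_smul_polar_le hdecay r φ)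
  have hneg :
      ∫ r in Iic 0, |r| • g (r * Real.cos φ, r * Real.sin φ)
        = radialIntegral g (φ + π) := by
    rw [← neg_zero, ← integral_comp_neg_Ioi]
    refine setIntegral_congr_fun measurableSet_Ioi fun r (hr : 0 < r) => ?_
    simp only [abs_neg, abs_of_pos hr, Real.cos_add_pi, Real.sin_add_pi, neg_mul, mul_neg]
  have hpos : ∫ r in Ioi 0, |r| • g (r * Real.cos φ, r * Real.sin φ) = radialIntegral g φ :=
    setIntegral_congr_fun measurableSet_Ioi fun r (hr : 0 < r) => by rw [abs_of_pos hr]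
  rw [← hneg, ← hpos, ← compl_Iic, add_comm]
  exact (integral_add_compl measurableSet_Iic hint).symm

theorem integrableOn_polarCoord_symm (hg : Integrable g) :
    IntegrableOn (fun p : ℝ × ℝ => p.1 • g (polarCoord.symm p)) polarCoord.target := by
  have h := (integrableOn_image_iff_integrableOn_abs_det_fderiv_smul volume
    polarCoord.open_target.measurableSet
    (fun p _ => (hasFDerivAt_polarCoord_symm p).hasFDerivWithinAt) polarCoord.symm.injOn g).mp
    (by rw [polarCoord.symm_image_target_eq_source]; exact hg.integrableOn)
  refine h.congr_fun (fun p hp => ?_) polarCoord.open_target.measurableSet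
  simp only [det_fderivPolarCoordSymm, abs_of_pos (mem_Ioi.mp hp.1)]

theorem integral_eq_integral_radialIntegral (hg : Integrable g) :
    ∫ q, g q = ∫ φ in -π..π, radialIntegral g φ := by
  have hpolar := integrableOn_polarCoord_symm hg
  rw [IntegrableOn, polarCoord_target, Measure.volume_eq_prod, ← Measure.prod_restrict] at hpolar
  rw [← integral_comp_polarCoord_symm, polarCoord_target, Measure.volume_eq_prod,
    ← Measure.prod_restrict,
    integral_prod_symm _ hpolar, intervalIntegral.integral_of_le (by linarith [pi_pos]),
    integral_Ioc_eq_integral_Ioo]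
  rfl

end Polar

local notation "ℝ²" => EuclideanSpace ℝ (Fin 2)

-- `ℝ × ℝ` carries the sup norm and no inner product; Mathlib's Fourier transform lives on `ℝ²`.
def euclideanToProd : ℝ² ≃L[ℝ] ℝ × ℝ :=
  (EuclideanSpace.equiv (Fin 2) ℝ).trans (ContinuousLinearEquiv.finTwoArrow ℝ ℝ)

theorem integral_comp_euclideanToProd {E : Type*} [NormedAddCommGroup E] [NormedSpace ℝ E]
    (F : ℝ × ℝ → E) : ∫ w, F (euclideanToProd w) = ∫ p, F p :=
  ((volume_preserving_finTwoArrow ℝ).comp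
    (EuclideanSpace.volume_preserving_symm_measurableEquiv_toLp (Fin 2))).integral_comp
    euclideanToProd.toHomeomorph.measurableEmbedding F

theorem inner_eq_euclideanToProd (w ξ : ℝ²) :
    ⟪w, ξ⟫ = (euclideanToProd w).1 * (euclideanToProd ξ).1
      + (euclideanToProd w).2 * (euclideanToProd ξ).2 := by
  simp [euclideanToProd, PiLp.inner_apply, Fin.sum_univ_two, mul_comm]

def fourierProd (f : 𝓢(ℝ × ℝ, ℂ)) : 𝓢(ℝ × ℝ, ℂ) :=
  compCLMOfContinuousLinearEquiv ℂ euclideanToProd.symm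
    (𝓕 (compCLMOfContinuousLinearEquiv ℂ euclideanToProd f))

theorem fourierProd_euclideanToProd (f : 𝓢(ℝ × ℝ, ℂ)) (ξ : ℝ²) :
    fourierProd f (euclideanToProd ξ) = 𝓕 (fun w => f (euclideanToProd w)) ξ :=
  congrArg (𝓕 (fun w => f (euclideanToProd w))) (euclideanToProd.symm_apply_apply ξ)

theorem fourierProd_apply (f : 𝓢(ℝ × ℝ, ℂ)) (q : ℝ × ℝ) :
    fourierProd f q = ∫ p : ℝ × ℝ, f p * exp (-2 * π * I * (p.1 * q.1 + p.2 * q.2)) := by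
  obtain ⟨ξ, rfl⟩ := euclideanToProd.surjective q
  rw [fourierProd_euclideanToProd, Real.fourier_eq', ← integral_comp_euclideanToProd]
  congr 1 with w
  rw [inner_eq_euclideanToProd, smul_eq_mul, mul_comm]
  congr 2
  push_cast
  ring

theorem integral_fourierProd_mul_exp (f : 𝓢(ℝ × ℝ, ℂ)) (v : ℝ × ℝ) :
    ∫ q, fourierProd f q * exp (2 * π * I * (v.1 * q.1 + v.2 * q.2)) = f v := by
  obtain ⟨u, rfl⟩ := euclideanToProd.surjective v
  let fE := compCLMOfContinuousLinearEquiv ℂ euclideanToProd f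
  have hinv : 𝓕⁻ (𝓕 fun w => f (euclideanToProd w)) u = f (euclideanToProd u) :=
    congrFun (fE.continuous.fourierInv_fourier_eq fE.integrable (𝓕 fE).integrable) u
  rw [Real.fourierInv_eq'] at hinv
  rw [← integral_comp_euclideanToProd, ← hinv]
  congr 1 with w
  rw [fourierProd_euclideanToProd, inner_eq_euclideanToProd, smul_eq_mul, mul_comm]
  congr 2
  push_cast
  ring

-- `radonS f θ t = ∫ z, f (radonCoord θ (t, z))`: the point at parameter `z` on the line of offset
-- `t` and direction `(cos θ, sin θ)`.
def radonCoord (θ : ℝ) (p : ℝ × ℝ) : ℝ × ℝ :=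
  (p.2 * Real.cos θ - p.1 * Real.sin θ, p.2 * Real.sin θ + p.1 * Real.cos θ)

theorem radonCoord_involutive (θ : ℝ) : Function.Involutive (radonCoord θ) := by
  intro p
  have h := Real.sin_sq_add_cos_sq θ
  ext
  · simp only [radonCoord]; linear_combination p.1 * h
  · simp only [radonCoord]; linear_combination p.2 * h

theorem continuous_radonCoord (θ : ℝ) : Continuous (radonCoord θ) := by
  unfold radonCoord; fun_prop

theorem measurePreserving_radonCoord (θ : ℝ) : MeasurePreserving (radonCoord θ) := by
  let M : ℝ × ℝ →ₗ[ℝ] ℝ × ℝ := Matrix.toLin (Module.Basis.finTwoProd ℝ)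
    (Module.Basis.finTwoProd ℝ) !![-Real.sin θ, Real.cos θ; Real.cos θ, Real.sin θ]
  have hM : radonCoord θ = M := by
    funext p
    rw [Matrix.toLin_finTwoProd_apply]
    simp only [radonCoord]
    ext <;> ring
  have hdet : LinearMap.det M = -1 := by
    rw [LinearMap.det_toLin, Matrix.det_fin_two_of]
    linear_combination -(Real.sin_sq_add_cos_sq θ)
  refine ⟨(continuous_radonCoord θ).measurable, ?_⟩
  rw [hM, Measure.map_linearMap_addHaar_eq_smul_addHaar volume (by simp [hdet]), hdet]
  simp

theorem measurableEmbedding_radonCoord (θ : ℝ) : MeasurableEmbedding (radonCoord θ) :=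
  (Homeomorph.mk (radonCoord_involutive θ).toPerm (continuous_radonCoord θ)
    (continuous_radonCoord θ)).measurableEmbedding

theorem fourierProj_eq_fourierProd (f : 𝓢(ℝ × ℝ, ℂ)) (θ r : ℝ) :
    fourierProj f θ r = fourierProd f (r * -Real.sin θ, r * Real.cos θ) := by
  have hint : Integrable fun p : ℝ × ℝ => f (radonCoord θ p) * exp (-2 * π * I * r * p.1) :=
    (((measurePreserving_radonCoord θ).integrable_comp_emb
      (measurableEmbedding_radonCoord θ)).mpr f.integrable).mul_bdd (c := 1)
      (by fun_prop) (Filter.Eventually.of_forall fun p => by simp [Complex.norm_exp])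
  have hphase (p : ℝ × ℝ) :
      (radonCoord θ p).1 * (r * -Real.sin θ) + (radonCoord θ p).2 * (r * Real.cos θ)
        = r * p.1 := by
    simp only [radonCoord]
    linear_combination r * p.1 * Real.sin_sq_add_cos_sq θ
  calc fourierProj f θ r
      = ∫ t, ∫ z, f (radonCoord θ (t, z)) * exp (-2 * π * I * r * t) := by
        simp only [fourierProj, radonS, radonCoord, integral_mul_const]
    _ = ∫ p : ℝ × ℝ, f (radonCoord θ p) * exp (-2 * π * I * r * p.1) := by
        rw [Measure.volume_eq_prod] at hint ⊢
        exact (integral_prod _ hint).symm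
    _ = ∫ p : ℝ × ℝ, f (radonCoord θ p) * exp (-2 * π * I *
          ((radonCoord θ p).1 * ((r * -Real.sin θ : ℝ) : ℂ)
            + (radonCoord θ p).2 * ((r * Real.cos θ : ℝ) : ℂ))) := by
        congr 1 with p
        rw [← ofReal_mul, ← ofReal_mul, ← ofReal_add, hphase, ofReal_mul, mul_assoc]
    _ = fourierProd f (r * -Real.sin θ, r * Real.cos θ) := by
        rw [fourierProd_apply]
        exact (measurePreserving_radonCoord θ).integral_comp (measurableEmbedding_radonCoord θ)
          (fun q => f q * exp (-2 * π * I *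
            (q.1 * ((r * -Real.sin θ : ℝ) : ℂ) + q.2 * ((r * Real.cos θ : ℝ) : ℂ))))

/-- Filtered backprojection inversion formula: for Schwartz `f`,
`f(x,y) = ∫_0^π F₁⁻¹(F₁(Rf(θ,·)) · |·|)(y cos θ − x sin θ) dθ`. -/
theorem filtered_backprojection (f : 𝓢(ℝ × ℝ, ℂ)) (x y : ℝ) :
    f (x, y) =
      ∫ θ in Set.Ioc (0 : ℝ) Real.pi,
        ∫ r : ℝ, (fourierProj f θ r * (|r| : ℝ)) *
          Complex.exp (2 * Real.pi * Complex.I * r *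
            (y * Real.cos θ - x * Real.sin θ)) := by
  set g : ℝ × ℝ → ℂ := fun q => fourierProd f q * exp (2 * π * I * (x * q.1 + y * q.2))
  have hg : Continuous g := by fun_prop
  obtain ⟨C, hC⟩ := (fourierProd f).exists_one_add_norm_pow_mul_le 3
  have hdecay (q : ℝ × ℝ) : (1 + ‖q‖) ^ 3 * ‖g q‖ ≤ C := by
    simpa [g, Complex.norm_exp] using hC q
  have hline (θ : ℝ) :
      ∫ r : ℝ, (fourierProj f θ r * (|r| : ℝ)) *
          exp (2 * π * I * r * (y * Real.cos θ - x * Real.sin θ))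
        = ∫ r : ℝ, |r| • g (r * Real.cos (θ + π / 2), r * Real.sin (θ + π / 2)) := by
    congr 1 with r
    rw [Real.cos_add_pi_div_two, Real.sin_add_pi_div_two, fourierProj_eq_fourierProd,
      Complex.real_smul]
    simp only [g]
    rw [mul_right_comm, mul_comm]
    congr 3
    push_cast
    ring
  have hperiod := (periodic_radialIntegral g).intervalIntegral_add_add_eq
    (continuous_radialIntegral hg hdecay) (π / 2) (-π)
  calc f (x, y) = ∫ q, g q := (integral_fourierProd_mul_exp f (x, y)).symm
    _ = ∫ φ in -π..π, radialIntegral g φ :=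
        integral_eq_integral_radialIntegral
          (integrable_of_one_add_norm_pow_mul_le (by simp) hg.aestronglyMeasurable hdecay)
    _ = ∫ θ in 0..π,
          (radialIntegral g (θ + π / 2) + radialIntegral g (θ + π / 2 + π)) := by
        rw [intervalIntegral.integral_comp_add_right
            (fun φ => radialIntegral g φ + radialIntegral g (φ + π)),
          zero_add, add_comm π, hperiod, show -π + 2 * π = π by ring]
    _ = ∫ θ in Ioc 0 π,
          ∫ r : ℝ, |r| • g (r * Real.cos (θ + π / 2), r * Real.sin (θ + π / 2)) := by
        simp_rw [intervalIntegral.integral_of_le pi_pos.le,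
          integral_abs_smul_eq_radialIntegral_add hg hdecay]
    _ = _ := by simp_rw [hline]

end
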